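/- arXiv:2103.12149 — 6 statements merged into one kernel-verified Lean document; each statement's English description precedes it below -/
import Mathlib

section
/- Let A > 0, δ > 0, let k₀ ≥ 1 be an integer, and let (M_k)_{k ≥ k₀} be a sequence of strictly positive real numbers satisfying M_k = M_{k−1}·((k − 1 + δ)·A)/((k + δ)·A + 1) for all integers k > k₀. Then there exists a constant L > 0 such that lim_{k→∞} M_k·k^(1 + 1/A) = L; in particular M_k is asymptotically proportional to k^(−(1 + 1/A)). -/
/-!
Put `α = 1 + 1/A` and `N_k = M_k k^α`. The recurrence gives
`N_{k+1} / N_k = (1 + 1/k)^α / (1 + α/(k + δ))`, whose logarithm is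
`α/k - α/(k + δ) + O(1/k²) = O(1/k²)`. Hence the logarithms of the ratios are summable and
`N_k → N_{k₀} · exp (∑ log-ratios) > 0`.
-/

open Filter Real Topology

lemma abs_log_one_add_sub_self_le {s : ℝ} (hs : 0 ≤ s) : |log (1 + s) - s| ≤ s ^ 2 := by
  have hs1 : 0 < 1 + s := by linarith
  have hupper : log (1 + s) ≤ s := by linarith [log_le_sub_one_of_pos hs1]
  have hlower : s - (1 - (1 + s)⁻¹) ≤ s ^ 2 := by
    have h : s - (1 - (1 + s)⁻¹) = s ^ 2 / (1 + s) := by field_simp; ring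
    exact h ▸ div_le_self (sq_nonneg s) (by linarith)
  rw [abs_le]
  constructor <;> nlinarith [one_sub_inv_le_log_of_pos hs1]

lemma abs_log_rpow_div_le {α δ x : ℝ} (hα : 0 ≤ α) (hδ : 0 ≤ δ) (hx : 0 < x) :
    |log ((1 + 1 / x) ^ α / (1 + α / (x + δ)))| ≤ (α + α * δ + α ^ 2) / x ^ 2 := by
  have hxδ : 0 < x + δ := by linarith
  have hs : 0 ≤ α / (x + δ) := by positivity
  have h₁ : α * |log (1 + 1 / x) - 1 / x| ≤ α / x ^ 2 := by
    have := mul_le_mul_of_nonneg_left (abs_log_one_add_sub_self_le (one_div_nonneg.2 hx.le)) hα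
    simpa [div_pow, div_eq_mul_inv] using this
  have h₂ : |α / x - α / (x + δ)| ≤ α * δ / x ^ 2 := by
    have h : α / x - α / (x + δ) = α * δ / (x * (x + δ)) := by field_simp; ring
    rw [h, abs_of_nonneg (by positivity)]
    gcongr
    nlinarith
  have h₃ : |α / (x + δ) - log (1 + α / (x + δ))| ≤ α ^ 2 / x ^ 2 := by
    rw [abs_sub_comm, ← div_pow]
    refine (abs_log_one_add_sub_self_le hs).trans ?_
    rw [div_pow, div_pow]
    gcongr
    linarith
  rw [log_div (by positivity) (by positivity), log_rpow (by positivity)]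
  calc |α * log (1 + 1 / x) - log (1 + α / (x + δ))|
      = |α * (log (1 + 1 / x) - 1 / x) + (α / x - α / (x + δ))
          + (α / (x + δ) - log (1 + α / (x + δ)))| := by congr 1; ring
    _ ≤ α * |log (1 + 1 / x) - 1 / x| + |α / x - α / (x + δ)|
          + |α / (x + δ) - log (1 + α / (x + δ))| := by
        rw [← abs_of_nonneg hα, ← abs_mul, abs_of_nonneg hα]
        exact abs_add_three _ _ _
    _ ≤ (α + α * δ + α ^ 2) / x ^ 2 := by
        rw [add_div, add_div]; gcongr

lemma summable_log_rpow_div {α δ c : ℝ} (hα : 0 ≤ α) (hδ : 0 ≤ δ) (hc : 1 ≤ c) :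
    Summable fun n : ℕ => log ((1 + 1 / (c + n)) ^ α / (1 + α / (c + n + δ))) := by
  have hsq : Summable fun n : ℕ => (α + α * δ + α ^ 2) / ((n : ℝ) + 1) ^ 2 := by
    have := (summable_nat_add_iff 1).2 (Real.summable_one_div_nat_pow.2 one_lt_two)
    simpa [div_eq_mul_inv] using this.mul_left (α + α * δ + α ^ 2)
  refine Summable.of_norm_bounded hsq fun n => ?_
  have hn : (n : ℝ) + 1 ≤ c + n := by linarith
  refine (abs_log_rpow_div_le hα hδ (by positivity)).trans ?_
  gcongr

lemma exists_pos_tendsto_of_summable_log {u r : ℕ → ℝ} (hu : 0 < u 0) (hr : ∀ n, 0 < r n)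
    (hsum : Summable fun n => log (r n)) (hstep : ∀ n, u (n + 1) = u n * r n) :
    ∃ L, 0 < L ∧ Tendsto u atTop (𝓝 L) := by
  have hprod : ∀ n, u n = u 0 * ∏ i ∈ Finset.range n, r i := by
    intro n
    induction n with
    | zero => simp
    | succ n ih => rw [hstep, ih, Finset.prod_range_succ, mul_assoc]
  refine ⟨u 0 * exp (∑' n, log (r n)), by positivity, ?_⟩
  exact (((hasProd_of_hasSum_log hr hsum.hasSum).tendsto_prod_nat).const_mul _).congr
    fun n => (hprod n).symm

lemma recurrence_factor_mul_rpow_succ {A δ x : ℝ} (hA : 0 < A) (hx : 0 < x) (hδ : 0 ≤ δ) :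
    (x + δ) * A / ((x + 1 + δ) * A + 1) * (x + 1) ^ (1 + 1 / A) =
      x ^ (1 + 1 / A) * ((1 + 1 / x) ^ (1 + 1 / A) / (1 + (1 + 1 / A) / (x + δ))) := by
  have hxδ : 0 < x + δ := by linarith
  have hsucc : x + 1 = x * (1 + 1 / x) := by field_simp
  have hfactor : (x + δ) * A / ((x + 1 + δ) * A + 1) = (1 + (1 + 1 / A) / (x + δ))⁻¹ := by
    field_simp
    ring
  rw [hfactor, hsucc, mul_rpow hx.le (by positivity)]
  ring

/-- Any positive solution of the equilibrium recurrence
`M_k = M_{k-1} · ((k - 1 + δ)·A)/((k + δ)·A + 1)` decays as a power law with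
exponent `1 + 1/A`: the sequence `M_k · k^(1 + 1/A)` converges to a positive limit. -/
theorem recurrence_power_law (A δ : ℝ) (hA : 0 < A) (hδ : 0 < δ)
    (k₀ : ℕ) (hk₀ : 1 ≤ k₀) (M : ℕ → ℝ)
    (hpos : ∀ k : ℕ, k₀ ≤ k → 0 < M k)
    (hrec : ∀ k : ℕ, k₀ < k →
      M k = M (k - 1) * (((k : ℝ) - 1 + δ) * A) / (((k : ℝ) + δ) * A + 1)) :
    ∃ L : ℝ, 0 < L ∧
      Filter.Tendsto (fun k : ℕ => M k * (k : ℝ) ^ (1 + 1 / A)) Filter.atTop (nhds L) := by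
  have hk₀' : (1 : ℝ) ≤ k₀ := by exact_mod_cast hk₀
  obtain ⟨L, hL, hlim⟩ := exists_pos_tendsto_of_summable_log
    (u := fun n => M (k₀ + n) * ((k₀ + n : ℕ) : ℝ) ^ (1 + 1 / A))
    (r := fun n => (1 + 1 / (k₀ + n : ℝ)) ^ (1 + 1 / A) / (1 + (1 + 1 / A) / (k₀ + n + δ)))
    (by simpa using mul_pos (hpos k₀ le_rfl) (by positivity))
    (fun n => by positivity)
    (summable_log_rpow_div (by positivity) hδ.le hk₀')
    (fun n => by
      rw [← add_assoc, hrec _ (by omega), Nat.add_sub_cancel]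
      push_cast
      rw [add_sub_cancel_right, mul_div_assoc, mul_assoc,
        recurrence_factor_mul_rpow_succ hA (by positivity) hδ.le, mul_assoc])
  refine ⟨L, hL, (tendsto_add_atTop_iff_nat k₀).1 ?_⟩
  simpa only [add_comm] using hlim
end

section
/- Suppose 0 < b < 1, 0 < e < 1, r ∈ [0,1], p, q ≥ 0 with p + q ≤ 1, and δ > 0. Then for every (x,y) ∈ [0,1]²: the denominators 1+s − b·a_B(x) − (1−e)·a_R(x), 1+s − e·a_R(x) − (1−b)·a_B(x), 1+s − e·a_B(y) − (1−e)·a_R(y), 1+s − b·a_R(y) − (1−b)·a_B(y), and D3(x,y) are all strictly positive; each of P1RR(x), P1BR(x), P2RR(y), P2BR(y) lies in [0,1]; P3RR(x,y) + P3BR(x,y) ∈ [0,1] and P3RR(x,y) + P3RB(x,y) ∈ [0,1]; and consequently F(x,y) ∈ [0,1]², i.e. F maps the unit square into itself. -/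
noncomputable def sVal (p q δ : ℝ) : ℝ := (p + q) * δ

noncomputable def aR (r p q δ t : ℝ) : ℝ := t + r * sVal p q δ

noncomputable def aB (r p q δ t : ℝ) : ℝ := 1 - t + (1 - r) * sVal p q δ

noncomputable def P1RR (r p q b e δ x : ℝ) : ℝ :=
  e * aR r p q δ x / (1 + sVal p q δ - b * aB r p q δ x - (1 - e) * aR r p q δ x)

noncomputable def P1RB (r p q b e δ x : ℝ) : ℝ :=
  (1 - b) * aB r p q δ x / (1 + sVal p q δ - b * aB r p q δ x - (1 - e) * aR r p q δ x)

noncomputable def P1BR (r p q b e δ x : ℝ) : ℝ :=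
  (1 - e) * aR r p q δ x / (1 + sVal p q δ - e * aR r p q δ x - (1 - b) * aB r p q δ x)

noncomputable def P1BB (r p q b e δ x : ℝ) : ℝ :=
  b * aB r p q δ x / (1 + sVal p q δ - e * aR r p q δ x - (1 - b) * aB r p q δ x)

noncomputable def P2RR (r p q b e δ y : ℝ) : ℝ :=
  e * aR r p q δ y / (1 + sVal p q δ - e * aB r p q δ y - (1 - e) * aR r p q δ y)

noncomputable def P2RB (r p q b e δ y : ℝ) : ℝ :=
  (1 - e) * aB r p q δ y / (1 + sVal p q δ - e * aB r p q δ y - (1 - e) * aR r p q δ y)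

noncomputable def P2BR (r p q b e δ y : ℝ) : ℝ :=
  (1 - b) * aR r p q δ y / (1 + sVal p q δ - b * aR r p q δ y - (1 - b) * aB r p q δ y)

noncomputable def P2BB (r p q b e δ y : ℝ) : ℝ :=
  b * aB r p q δ y / (1 + sVal p q δ - b * aR r p q δ y - (1 - b) * aB r p q δ y)

noncomputable def D3 (r p q b e δ x y : ℝ) : ℝ :=
  (1 + sVal p q δ) ^ 2 - b * aR r p q δ y * aB r p q δ x - e * aR r p q δ x * aB r p q δ y
    - (1 - b) * aB r p q δ x * aB r p q δ y - (1 - e) * aR r p q δ x * aR r p q δ y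

noncomputable def P3RR (r p q b e δ x y : ℝ) : ℝ :=
  e * aR r p q δ y * aR r p q δ x / D3 r p q b e δ x y

noncomputable def P3BR (r p q b e δ x y : ℝ) : ℝ :=
  (1 - e) * aB r p q δ y * aR r p q δ x / D3 r p q b e δ x y

noncomputable def P3RB (r p q b e δ x y : ℝ) : ℝ :=
  (1 - b) * aR r p q δ y * aB r p q δ x / D3 r p q b e δ x y

noncomputable def P3BB (r p q b e δ x y : ℝ) : ℝ :=
  b * aB r p q δ y * aB r p q δ x / D3 r p q b e δ x y

noncomputable def F (r p q b e δ : ℝ) (θ : ℝ × ℝ) : ℝ × ℝ :=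
  (p * (r * P1RR r p q b e δ θ.1 + (1 - r) * P1BR r p q b e δ θ.1) + q * r
      + (1 - p - q) * (P3RR r p q b e δ θ.1 θ.2 + P3BR r p q b e δ θ.1 θ.2),
   p * r + q * (r * P2RR r p q b e δ θ.2 + (1 - r) * P2BR r p q b e δ θ.2)
      + (1 - p - q) * (P3RR r p q b e δ θ.1 θ.2 + P3RB r p q b e δ θ.1 θ.2))

noncomputable def Ci (r p q b e δ x y : ℝ) : ℝ :=
  p * r * e / (1 + sVal p q δ - b * aB r p q δ x - (1 - e) * aR r p q δ x)
    + p * (1 - r) * (1 - e) / (1 + sVal p q δ - e * aR r p q δ x - (1 - b) * aB r p q δ x)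
    + (1 - p - q) * (e * aR r p q δ y + (1 - e) * aB r p q δ y) / D3 r p q b e δ x y

noncomputable def Co (r p q b e δ x y : ℝ) : ℝ :=
  q * r * e / (1 + sVal p q δ - e * aB r p q δ y - (1 - e) * aR r p q δ y)
    + q * (1 - r) * (1 - b) / (1 + sVal p q δ - b * aR r p q δ y - (1 - b) * aB r p q δ y)
    + (1 - p - q) * (e * aR r p q δ x + (1 - b) * aB r p q δ x) / D3 r p q b e δ x y

noncomputable def CiB (r p q b e δ x y : ℝ) : ℝ := Ci (1 - r) p q e b δ (1 - x) (1 - y)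

noncomputable def CoB (r p q b e δ x y : ℝ) : ℝ := Co (1 - r) p q e b δ (1 - x) (1 - y)

/-!
Writing `A = a_R(t)` and `B = a_B(t)`, we have `A, B ≥ 0` on `[0,1]` and `A + B = 1 + s`.
Substituting `1 + s = A + B` turns every one-step denominator into a combination of `A` and
`B` with weights in `(0,1)`, e.g. `1 + s - b B - (1-e) A = e A + (1-b) B`, and
`(1+s)² = (A_x + B_x)(A_y + B_y)` turns `D3` into
`A_x (e A_y + (1-e) B_y) + B_x ((1-b) A_y + b B_y)`.
So every denominator is positive, and every attachment probability (or sum of two) has the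
form `u / (u + v)` with `u, v ≥ 0`. `F` is then a convex combination of points of `[0,1]`.
-/

lemma mul_add_mul_pos {α : Type*} [Semiring α] [LinearOrder α] [IsStrictOrderedRing α]
    {w₁ w₂ a b : α} (hw₁ : 0 < w₁) (hw₂ : 0 < w₂) (ha : 0 ≤ a) (hb : 0 ≤ b) (hab : 0 < a + b) :
    0 < w₁ * a + w₂ * b := by
  rcases ha.eq_or_lt with rfl | ha
  · rw [zero_add] at hab
    simpa using mul_pos hw₂ hab
  · exact add_pos_of_pos_of_nonneg (mul_pos hw₁ ha) (mul_nonneg hw₂.le hb)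

lemma div_add_mem_unitInterval {u v : ℝ} (hu : 0 ≤ u) (hv : 0 ≤ v) :
    u / (u + v) ∈ unitInterval :=
  unitInterval.div_mem hu (add_nonneg hu hv) (le_add_of_nonneg_right hv)

lemma mul_add_one_sub_mul_mem_unitInterval {r u v : ℝ} (hr : r ∈ unitInterval)
    (hu : u ∈ unitInterval) (hv : v ∈ unitInterval) : r * u + (1 - r) * v ∈ unitInterval :=
  convex_Icc 0 1 hu hv hr.1 (sub_nonneg.2 hr.2) (by ring)

lemma convex_comb₃_mem_unitInterval {p q u v w : ℝ} (hp : 0 ≤ p) (hq : 0 ≤ q) (hpq : p + q ≤ 1)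
    (hu : u ∈ unitInterval) (hv : v ∈ unitInterval) (hw : w ∈ unitInterval) :
    p * u + q * v + (1 - p - q) * w ∈ unitInterval := by
  have hr : 0 ≤ 1 - p - q := by linarith
  constructor
  · have := mul_nonneg hp hu.1
    have := mul_nonneg hq hv.1
    have := mul_nonneg hr hw.1
    linarith
  · have := mul_nonneg hp (sub_nonneg.2 hu.2)
    have := mul_nonneg hq (sub_nonneg.2 hv.2)
    have := mul_nonneg hr (sub_nonneg.2 hw.2)
    linarith

section DMPA

variable {r p q b e δ : ℝ}

lemma sVal_nonneg (hp : 0 ≤ p) (hq : 0 ≤ q) (hδ : 0 ≤ δ) : 0 ≤ sVal p q δ :=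
  mul_nonneg (add_nonneg hp hq) hδ

lemma aR_nonneg {t : ℝ} (hr : 0 ≤ r) (hs : 0 ≤ sVal p q δ) (ht : 0 ≤ t) : 0 ≤ aR r p q δ t :=
  add_nonneg ht (mul_nonneg hr hs)

lemma aB_nonneg {t : ℝ} (hr : r ≤ 1) (hs : 0 ≤ sVal p q δ) (ht : t ≤ 1) : 0 ≤ aB r p q δ t :=
  add_nonneg (sub_nonneg.2 ht) (mul_nonneg (sub_nonneg.2 hr) hs)

lemma aR_add_aB_pos (t : ℝ) (hs : 0 ≤ sVal p q δ) : 0 < aR r p q δ t + aB r p q δ t := by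
  simp only [aR, aB]
  linarith

variable (r p q b e δ)

lemma P1RR_denom_eq (x : ℝ) :
    1 + sVal p q δ - b * aB r p q δ x - (1 - e) * aR r p q δ x
      = e * aR r p q δ x + (1 - b) * aB r p q δ x := by
  simp only [aR, aB]
  ring

lemma P1BR_denom_eq (x : ℝ) :
    1 + sVal p q δ - e * aR r p q δ x - (1 - b) * aB r p q δ x
      = (1 - e) * aR r p q δ x + b * aB r p q δ x := by
  simp only [aR, aB]
  ring

lemma P2RR_denom_eq (y : ℝ) :
    1 + sVal p q δ - e * aB r p q δ y - (1 - e) * aR r p q δ y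
      = e * aR r p q δ y + (1 - e) * aB r p q δ y := by
  simp only [aR, aB]
  ring

lemma P2BR_denom_eq (y : ℝ) :
    1 + sVal p q δ - b * aR r p q δ y - (1 - b) * aB r p q δ y
      = (1 - b) * aR r p q δ y + b * aB r p q δ y := by
  simp only [aR, aB]
  ring

lemma D3_eq_expand_x (x y : ℝ) :
    D3 r p q b e δ x y
      = (e * aR r p q δ y + (1 - e) * aB r p q δ y) * aR r p q δ x
        + ((1 - b) * aR r p q δ y + b * aB r p q δ y) * aB r p q δ x := by
  simp only [D3, aR, aB]
  ring

lemma D3_eq_expand_y (x y : ℝ) :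
    D3 r p q b e δ x y
      = (e * aR r p q δ x + (1 - b) * aB r p q δ x) * aR r p q δ y
        + ((1 - e) * aR r p q δ x + b * aB r p q δ x) * aB r p q δ y := by
  simp only [D3, aR, aB]
  ring

lemma P3RR_add_P3BR_eq (x y : ℝ) :
    P3RR r p q b e δ x y + P3BR r p q b e δ x y
      = (e * aR r p q δ y + (1 - e) * aB r p q δ y) * aR r p q δ x / D3 r p q b e δ x y := by
  rw [P3RR, P3BR, ← add_div]
  ring

lemma P3RR_add_P3RB_eq (x y : ℝ) :
    P3RR r p q b e δ x y + P3RB r p q b e δ x y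
      = (e * aR r p q δ x + (1 - b) * aB r p q δ x) * aR r p q δ y / D3 r p q b e δ x y := by
  rw [P3RR, P3RB, ← add_div]
  ring

variable {r p q b e δ} {x y : ℝ}

lemma P1RR_denom_pos (he : 0 < e) (hb : b < 1) (hs : 0 ≤ sVal p q δ)
    (hA : 0 ≤ aR r p q δ x) (hB : 0 ≤ aB r p q δ x) :
    0 < 1 + sVal p q δ - b * aB r p q δ x - (1 - e) * aR r p q δ x := by
  rw [P1RR_denom_eq]
  exact mul_add_mul_pos he (sub_pos.2 hb) hA hB (aR_add_aB_pos x hs)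

lemma P1BR_denom_pos (he : e < 1) (hb : 0 < b) (hs : 0 ≤ sVal p q δ)
    (hA : 0 ≤ aR r p q δ x) (hB : 0 ≤ aB r p q δ x) :
    0 < 1 + sVal p q δ - e * aR r p q δ x - (1 - b) * aB r p q δ x := by
  rw [P1BR_denom_eq]
  exact mul_add_mul_pos (sub_pos.2 he) hb hA hB (aR_add_aB_pos x hs)

lemma P2RR_denom_pos (he₀ : 0 < e) (he₁ : e < 1) (hs : 0 ≤ sVal p q δ)
    (hA : 0 ≤ aR r p q δ y) (hB : 0 ≤ aB r p q δ y) :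
    0 < 1 + sVal p q δ - e * aB r p q δ y - (1 - e) * aR r p q δ y := by
  rw [P2RR_denom_eq]
  exact mul_add_mul_pos he₀ (sub_pos.2 he₁) hA hB (aR_add_aB_pos y hs)

lemma P2BR_denom_pos (hb₀ : 0 < b) (hb₁ : b < 1) (hs : 0 ≤ sVal p q δ)
    (hA : 0 ≤ aR r p q δ y) (hB : 0 ≤ aB r p q δ y) :
    0 < 1 + sVal p q δ - b * aR r p q δ y - (1 - b) * aB r p q δ y := by
  rw [P2BR_denom_eq]
  exact mul_add_mul_pos (sub_pos.2 hb₁) hb₀ hA hB (aR_add_aB_pos y hs)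

lemma D3_pos (hb₀ : 0 < b) (hb₁ : b < 1) (he₀ : 0 < e) (he₁ : e < 1) (hs : 0 ≤ sVal p q δ)
    (hAx : 0 ≤ aR r p q δ x) (hBx : 0 ≤ aB r p q δ x)
    (hAy : 0 ≤ aR r p q δ y) (hBy : 0 ≤ aB r p q δ y) : 0 < D3 r p q b e δ x y := by
  have hTy := aR_add_aB_pos (r := r) y hs
  rw [D3_eq_expand_x]
  exact mul_add_mul_pos (mul_add_mul_pos he₀ (sub_pos.2 he₁) hAy hBy hTy)
    (mul_add_mul_pos (sub_pos.2 hb₁) hb₀ hAy hBy hTy) hAx hBx (aR_add_aB_pos x hs)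

lemma P1RR_mem_unitInterval (he : 0 ≤ e) (hb : b ≤ 1)
    (hA : 0 ≤ aR r p q δ x) (hB : 0 ≤ aB r p q δ x) : P1RR r p q b e δ x ∈ unitInterval := by
  rw [P1RR, P1RR_denom_eq]
  exact div_add_mem_unitInterval (mul_nonneg he hA) (mul_nonneg (sub_nonneg.2 hb) hB)

lemma P1BR_mem_unitInterval (he : e ≤ 1) (hb : 0 ≤ b)
    (hA : 0 ≤ aR r p q δ x) (hB : 0 ≤ aB r p q δ x) : P1BR r p q b e δ x ∈ unitInterval := by
  rw [P1BR, P1BR_denom_eq]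
  exact div_add_mem_unitInterval (mul_nonneg (sub_nonneg.2 he) hA) (mul_nonneg hb hB)

lemma P2RR_mem_unitInterval (he₀ : 0 ≤ e) (he₁ : e ≤ 1)
    (hA : 0 ≤ aR r p q δ y) (hB : 0 ≤ aB r p q δ y) : P2RR r p q b e δ y ∈ unitInterval := by
  rw [P2RR, P2RR_denom_eq]
  exact div_add_mem_unitInterval (mul_nonneg he₀ hA) (mul_nonneg (sub_nonneg.2 he₁) hB)

lemma P2BR_mem_unitInterval (hb₀ : 0 ≤ b) (hb₁ : b ≤ 1)
    (hA : 0 ≤ aR r p q δ y) (hB : 0 ≤ aB r p q δ y) : P2BR r p q b e δ y ∈ unitInterval := by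
  rw [P2BR, P2BR_denom_eq]
  exact div_add_mem_unitInterval (mul_nonneg (sub_nonneg.2 hb₁) hA) (mul_nonneg hb₀ hB)

lemma P3RR_add_P3BR_mem_unitInterval (hb₀ : 0 ≤ b) (hb₁ : b ≤ 1) (he₀ : 0 ≤ e) (he₁ : e ≤ 1)
    (hAx : 0 ≤ aR r p q δ x) (hBx : 0 ≤ aB r p q δ x)
    (hAy : 0 ≤ aR r p q δ y) (hBy : 0 ≤ aB r p q δ y) :
    P3RR r p q b e δ x y + P3BR r p q b e δ x y ∈ unitInterval := by
  rw [P3RR_add_P3BR_eq, D3_eq_expand_x]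
  exact div_add_mem_unitInterval
    (mul_nonneg (add_nonneg (mul_nonneg he₀ hAy) (mul_nonneg (sub_nonneg.2 he₁) hBy)) hAx)
    (mul_nonneg (add_nonneg (mul_nonneg (sub_nonneg.2 hb₁) hAy) (mul_nonneg hb₀ hBy)) hBx)

lemma P3RR_add_P3RB_mem_unitInterval (hb₀ : 0 ≤ b) (hb₁ : b ≤ 1) (he₀ : 0 ≤ e) (he₁ : e ≤ 1)
    (hAx : 0 ≤ aR r p q δ x) (hBx : 0 ≤ aB r p q δ x)
    (hAy : 0 ≤ aR r p q δ y) (hBy : 0 ≤ aB r p q δ y) :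
    P3RR r p q b e δ x y + P3RB r p q b e δ x y ∈ unitInterval := by
  rw [P3RR_add_P3RB_eq, D3_eq_expand_y]
  exact div_add_mem_unitInterval
    (mul_nonneg (add_nonneg (mul_nonneg he₀ hAx) (mul_nonneg (sub_nonneg.2 hb₁) hBx)) hAy)
    (mul_nonneg (add_nonneg (mul_nonneg (sub_nonneg.2 he₁) hAx) (mul_nonneg hb₀ hBx)) hBy)

end DMPA

/-- Well-definedness of the DMPA attachment probabilities on the unit square:
all denominators are strictly positive, each attachment probability lies in `[0,1]`,
and the mean-field map `F` maps `[0,1]²` into itself. -/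
theorem F_maps_unit_square (r p q b e δ : ℝ)
    (hb0 : 0 < b) (hb1 : b < 1) (he0 : 0 < e) (he1 : e < 1)
    (hr0 : 0 ≤ r) (hr1 : r ≤ 1) (hp : 0 ≤ p) (hq : 0 ≤ q) (hpq : p + q ≤ 1)
    (hδ : 0 < δ) :
    ∀ x ∈ Set.Icc (0 : ℝ) 1, ∀ y ∈ Set.Icc (0 : ℝ) 1,
      (0 < 1 + sVal p q δ - b * aB r p q δ x - (1 - e) * aR r p q δ x) ∧
      (0 < 1 + sVal p q δ - e * aR r p q δ x - (1 - b) * aB r p q δ x) ∧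
      (0 < 1 + sVal p q δ - e * aB r p q δ y - (1 - e) * aR r p q δ y) ∧
      (0 < 1 + sVal p q δ - b * aR r p q δ y - (1 - b) * aB r p q δ y) ∧
      (0 < D3 r p q b e δ x y) ∧
      P1RR r p q b e δ x ∈ Set.Icc (0 : ℝ) 1 ∧
      P1BR r p q b e δ x ∈ Set.Icc (0 : ℝ) 1 ∧
      P2RR r p q b e δ y ∈ Set.Icc (0 : ℝ) 1 ∧
      P2BR r p q b e δ y ∈ Set.Icc (0 : ℝ) 1 ∧
      P3RR r p q b e δ x y + P3BR r p q b e δ x y ∈ Set.Icc (0 : ℝ) 1 ∧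
      P3RR r p q b e δ x y + P3RB r p q b e δ x y ∈ Set.Icc (0 : ℝ) 1 ∧
      (F r p q b e δ (x, y)).1 ∈ Set.Icc (0 : ℝ) 1 ∧
      (F r p q b e δ (x, y)).2 ∈ Set.Icc (0 : ℝ) 1 := by
  intro x hx y hy
  have hs := sVal_nonneg hp hq hδ.le
  have hAx := aR_nonneg hr0 hs hx.1
  have hBx := aB_nonneg hr1 hs hx.2
  have hAy := aR_nonneg hr0 hs hy.1
  have hBy := aB_nonneg hr1 hs hy.2
  have hr : r ∈ unitInterval := ⟨hr0, hr1⟩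
  have m1 := P1RR_mem_unitInterval he0.le hb1.le hAx hBx
  have m2 := P1BR_mem_unitInterval he1.le hb0.le hAx hBx
  have m3 := P2RR_mem_unitInterval (b := b) he0.le he1.le hAy hBy
  have m4 := P2BR_mem_unitInterval (e := e) hb0.le hb1.le hAy hBy
  have m5 := P3RR_add_P3BR_mem_unitInterval hb0.le hb1.le he0.le he1.le hAx hBx hAy hBy
  have m6 := P3RR_add_P3RB_mem_unitInterval hb0.le hb1.le he0.le he1.le hAx hBx hAy hBy
  exact ⟨P1RR_denom_pos he0 hb1 hs hAx hBx, P1BR_denom_pos he1 hb0 hs hAx hBx,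
    P2RR_denom_pos he0 he1 hs hAy hBy, P2BR_denom_pos hb0 hb1 hs hAy hBy,
    D3_pos hb0 hb1 he0 he1 hs hAx hBx hAy hBy, m1, m2, m3, m4, m5, m6,
    convex_comb₃_mem_unitInterval hp hq hpq (mul_add_one_sub_mul_mem_unitInterval hr m1 m2) hr m5,
    convex_comb₃_mem_unitInterval hp hq hpq hr (mul_add_one_sub_mul_mem_unitInterval hr m3 m4) m6⟩
end

section
/- Suppose b = e = 1/2, r ∈ [0,1], p, q ≥ 0 with p + q ≤ 1, and δ > 0. Then F(r, r) = (r, r), and the exponent constants at this point satisfy Ci(r,r) = (1 − q)/(δ(p+q) + 1), Co(r,r) = (1 − p)/(δ(p+q) + 1), CiB(r,r) = (1 − q)/(δ(p+q) + 1), and CoB(r,r) = (1 − p)/(δ(p+q) + 1). (This is case (i) of Theorem 2: when both groups are unbiased, (θ^i_*, θ^o_*) = (r, r) is a fixed point of the mean-field dynamics and both groups have identical in-degree and out-degree exponent constants that do not depend on r.) -/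
/-- Case (i) of Theorem 2: when both groups are unbiased (`b = e = 1/2`),
`(r, r)` is a fixed point of the mean-field dynamics and both groups have identical
in- and out-degree exponent constants that do not depend on `r`. -/
theorem unbiased_case (r p q δ : ℝ)
    (hr0 : 0 ≤ r) (hr1 : r ≤ 1) (hp : 0 ≤ p) (hq : 0 ≤ q) (hpq : p + q ≤ 1)
    (hδ : 0 < δ) :
    F r p q (1/2) (1/2) δ (r, r) = (r, r) ∧
    Ci r p q (1/2) (1/2) δ r r = (1 - q) / (δ * (p + q) + 1) ∧
    Co r p q (1/2) (1/2) δ r r = (1 - p) / (δ * (p + q) + 1) ∧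
    CiB r p q (1/2) (1/2) δ r r = (1 - q) / (δ * (p + q) + 1) ∧
    CoB r p q (1/2) (1/2) δ r r = (1 - p) / (δ * (p + q) + 1) := by
  have hs0 : (0:ℝ) ≤ (p + q) * δ := by positivity
  have h1 : (0:ℝ) < 1 + (p + q) * δ := by linarith
  have h1' : (1 + (p + q) * δ) ≠ 0 := ne_of_gt h1
  have h2 : ((1 + (p + q) * δ)/2) ≠ 0 := by positivity
  have h3 : ((1 + (p + q) * δ)^2/2) ≠ 0 := by positivity
  simp only [F, Ci, Co, CiB, CoB, P1RR, P1BR, P2RR, P2BR, P3RR, P3BR, P3RB, D3, aR, aB, sVal,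
    Prod.mk.injEq]
  rw [show (1:ℝ) - (1 - r) = r from by ring]
  rw [show 1 + (p + q) * δ - 1 / 2 * (1 - r + (1 - r) * ((p + q) * δ)) - (1 - 1 / 2) * (r + r * ((p + q) * δ)) = (1 + (p + q) * δ)/2 from by ring,
    show 1 + (p + q) * δ - 1 / 2 * (r + r * ((p + q) * δ)) - (1 - 1 / 2) * (1 - r + (1 - r) * ((p + q) * δ)) = (1 + (p + q) * δ)/2 from by ring,
    show (1 + (p + q) * δ) ^ 2 - 1 / 2 * (r + r * ((p + q) * δ)) * (1 - r + (1 - r) * ((p + q) * δ)) - 1 / 2 * (r + r * ((p + q) * δ)) * (1 - r + (1 - r) * ((p + q) * δ)) - (1 - 1 / 2) * (1 - r + (1 - r) * ((p + q) * δ)) * (1 - r + (1 - r) * ((p + q) * δ)) - (1 - 1 / 2) * (r + r * ((p + q) * δ)) * (r + r * ((p + q) * δ)) = (1 + (p + q) * δ)^2/2 from by ring,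
    show (1 + (p + q) * δ) ^ 2 - 1 / 2 * (1 - r + (1 - r) * ((p + q) * δ)) * (r + r * ((p + q) * δ)) - 1 / 2 * (1 - r + (1 - r) * ((p + q) * δ)) * (r + r * ((p + q) * δ)) - (1 - 1 / 2) * (r + r * ((p + q) * δ)) * (r + r * ((p + q) * δ)) - (1 - 1 / 2) * (1 - r + (1 - r) * ((p + q) * δ)) * (1 - r + (1 - r) * ((p + q) * δ)) = (1 + (p + q) * δ)^2/2 from by ring]
  refine ⟨⟨?_, ?_⟩, ?_, ?_, ?_, ?_⟩ <;> · field_simp; ring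
end

section
/- Suppose b = e = 1 (both groups fully homophilic), q = 1 − p with p ∈ [0,1] (so no edges are added between existing nodes), r ∈ (0,1), and δ > 0. Then F(r, r) = (r, r), and the exponent constants at this point satisfy Ci(r,r) = p/(δ + 1), Co(r,r) = (1 − p)/(δ + 1), CiB(r,r) = p/(δ + 1), and CoB(r,r) = (1 − p)/(δ + 1). (This is case (ii) of Theorem 2.) -/
/-- Case (ii) of Theorem 2: when both groups are fully homophilic (`b = e = 1`) and
no edges are added between existing nodes (`q = 1 - p`), `(r, r)` is a fixed point
and both groups have identical exponent constants `p/(δ+1)` and `(1-p)/(δ+1)`. -/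
theorem fully_homophilic_case (r p δ : ℝ)
    (hr0 : 0 < r) (hr1 : r < 1) (hp0 : 0 ≤ p) (hp1 : p ≤ 1) (hδ : 0 < δ) :
    F r p (1 - p) 1 1 δ (r, r) = (r, r) ∧
    Ci r p (1 - p) 1 1 δ r r = p / (δ + 1) ∧
    Co r p (1 - p) 1 1 δ r r = (1 - p) / (δ + 1) ∧
    CiB r p (1 - p) 1 1 δ r r = p / (δ + 1) ∧
    CoB r p (1 - p) 1 1 δ r r = (1 - p) / (δ + 1) := by
  have hrne : r ≠ 0 := ne_of_gt hr0
  have hrne1 : (1:ℝ) - r ≠ 0 := by intro h; linarith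
  have hδne : (1:ℝ) + δ ≠ 0 := by intro h; linarith
  have hA : r * (1 + δ) ≠ 0 := by positivity
  have hB : (1 - r) * (1 + δ) ≠ 0 := mul_ne_zero hrne1 hδne
  have h1 : P1RR r p (1 - p) 1 1 δ r = 1 := by
    simp only [P1RR, aR, aB, sVal]
    rw [show (1:ℝ) + (p + (1 - p)) * δ - 1 * (1 - r + (1 - r) * ((p + (1 - p)) * δ))
        - (1 - 1) * (r + r * ((p + (1 - p)) * δ)) = r * (1 + δ) from by ring,
      show (1:ℝ) * (r + r * ((p + (1 - p)) * δ)) = r * (1 + δ) from by ring]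
    exact div_self hA
  have h2 : P2RR r p (1 - p) 1 1 δ r = 1 := by
    simp only [P2RR, aR, aB, sVal]
    rw [show (1:ℝ) + (p + (1 - p)) * δ - 1 * (1 - r + (1 - r) * ((p + (1 - p)) * δ))
        - (1 - 1) * (r + r * ((p + (1 - p)) * δ)) = r * (1 + δ) from by ring,
      show (1:ℝ) * (r + r * ((p + (1 - p)) * δ)) = r * (1 + δ) from by ring]
    exact div_self hA
  refine ⟨?_, ?_, ?_, ?_, ?_⟩
  · simp only [F, Prod.mk.injEq]
    rw [h1, h2]
    simp only [P1BR, P2BR, P3RR, P3BR, P3RB, D3, aR, aB, sVal]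
    constructor <;> ring
  · simp only [Ci, aR, aB, sVal]
    rw [show (1:ℝ) + (p + (1 - p)) * δ - 1 * (1 - r + (1 - r) * ((p + (1 - p)) * δ))
        - (1 - 1) * (r + r * ((p + (1 - p)) * δ)) = r * (1 + δ) from by ring]
    rw [show p * r * 1 / (r * (1 + δ)) = p / (δ + 1) from by
      field_simp; ring]
    ring
  · simp only [Co, aR, aB, sVal]
    rw [show (1:ℝ) + (p + (1 - p)) * δ - 1 * (1 - r + (1 - r) * ((p + (1 - p)) * δ))
        - (1 - 1) * (r + r * ((p + (1 - p)) * δ)) = r * (1 + δ) from by ring]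
    rw [show (1 - p) * r * 1 / (r * (1 + δ)) = (1 - p) / (δ + 1) from by
      field_simp; ring]
    ring
  · simp only [CiB, Ci, aR, aB, sVal]
    rw [show (1:ℝ) + (p + (1 - p)) * δ - 1 * (1 - (1 - r) + (1 - (1 - r)) * ((p + (1 - p)) * δ))
        - (1 - 1) * (1 - r + (1 - r) * ((p + (1 - p)) * δ)) = (1 - r) * (1 + δ) from by ring]
    rw [show p * (1 - r) * 1 / ((1 - r) * (1 + δ)) = p / (δ + 1) from by
      field_simp; ring]
    ring
  · simp only [CoB, Co, aR, aB, sVal]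
    rw [show (1:ℝ) + (p + (1 - p)) * δ - 1 * (1 - (1 - r) + (1 - (1 - r)) * ((p + (1 - p)) * δ))
        - (1 - 1) * (1 - r + (1 - r) * ((p + (1 - p)) * δ)) = (1 - r) * (1 + δ) from by ring]
    rw [show (1 - p) * (1 - r) * 1 / ((1 - r) * (1 + δ)) = (1 - p) / (δ + 1) from by
      field_simp; ring]
    ring
end

section
/- Suppose b = e = 0 (both groups fully heterophilic), q = 1 − p with p ∈ [0,1] (so no edges are added between existing nodes), r ∈ (0,1), and δ > 0. Let x* = r(1 − 2p) + p. Then F(x*, 1 − x*) = (x*, 1 − x*), and the exponent constants at this point satisfy Ci(x*, 1−x*) = p(1−r)/(r(1+δ) + p(1−2r)), Co(x*, 1−x*) = (1−p)(1−r)/(r(δ−1) + p(2r−1) + 1), CiB(x*, 1−x*) = p·r/((1−r)(1+δ) + p(2r−1)), and CoB(x*, 1−x*) = (1−p)·r/((1−r)(δ−1) + p(1−2r) + 1). (This is case (iii) of Theorem 2.) -/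
/-- Case (iii) of Theorem 2: when both groups are fully heterophilic (`b = e = 0`)
and no edges are added between existing nodes (`q = 1 - p`), the point
`(x*, 1 - x*)` with `x* = r(1 - 2p) + p` is a fixed point, and the exponent
constants of the two groups take the stated closed forms. -/
theorem fully_heterophilic_case (r p δ : ℝ)
    (hr0 : 0 < r) (hr1 : r < 1) (hp0 : 0 ≤ p) (hp1 : p ≤ 1) (hδ : 0 < δ) :
    F r p (1 - p) 0 0 δ (r * (1 - 2 * p) + p, 1 - (r * (1 - 2 * p) + p)) =
      (r * (1 - 2 * p) + p, 1 - (r * (1 - 2 * p) + p)) ∧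
    Ci r p (1 - p) 0 0 δ (r * (1 - 2 * p) + p) (1 - (r * (1 - 2 * p) + p)) =
      p * (1 - r) / (r * (1 + δ) + p * (1 - 2 * r)) ∧
    Co r p (1 - p) 0 0 δ (r * (1 - 2 * p) + p) (1 - (r * (1 - 2 * p) + p)) =
      (1 - p) * (1 - r) / (r * (δ - 1) + p * (2 * r - 1) + 1) ∧
    CiB r p (1 - p) 0 0 δ (r * (1 - 2 * p) + p) (1 - (r * (1 - 2 * p) + p)) =
      p * r / ((1 - r) * (1 + δ) + p * (2 * r - 1)) ∧
    CoB r p (1 - p) 0 0 δ (r * (1 - 2 * p) + p) (1 - (r * (1 - 2 * p) + p)) =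
      (1 - p) * r / ((1 - r) * (δ - 1) + p * (1 - 2 * r) + 1) := by

  have hA : ((r * (1 - 2 * p) + p) + r * δ) ≠ 0 := by nlinarith
  have hB : (1 - (r * (1 - 2 * p) + p) + r * δ) ≠ 0 := by nlinarith
  refine ⟨?_, ?_, ?_, ?_, ?_⟩
  · simp only [F, P1RR, P1BR, P2RR, P2BR, P3RR, P3BR, P3RB, D3, aR, aB, sVal, Prod.mk.injEq]
    norm_num
    constructor
    · rw [show 1 + δ - (1 - (r * (1 - 2 * p) + p) + (1 - r) * δ) =
        (r * (1 - 2 * p) + p) + r * δ by ring, div_self hA]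
      ring
    · rw [show 1 + δ - (r * (1 - 2 * p) + p + (1 - r) * δ) =
        (1 - (r * (1 - 2 * p) + p)) + r * δ by ring, div_self hB]
      ring
  · simp only [Ci, D3, aR, aB, sVal]
    norm_num
    rw [div_eq_div_iff] <;> nlinarith
  · simp only [Co, D3, aR, aB, sVal]
    norm_num
    rw [div_eq_div_iff] <;> nlinarith
  · simp only [CiB, Ci, D3, aR, aB, sVal]
    norm_num
    rw [div_eq_div_iff] <;> nlinarith
  · simp only [CoB, Co, D3, aR, aB, sVal]
    norm_num
    rw [div_eq_div_iff] <;> nlinarith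
end

section
/- Let p ∈ (0,1) and δ ≥ 1. Then the functions h_i(r) = p(1−r)/(r(1+δ) + p(1−2r)) and h_o(r) = (1−p)(1−r)/(r(δ−1) + p(2r−1) + 1) are well defined (their denominators are strictly positive on [0,1]) and strictly decreasing on the interval [0,1]. -/
/-- In case (iii) of Theorem 2 (both groups fully heterophilic), the in- and
out-degree exponent constants `h_i(r) = p(1−r)/(r(1+δ) + p(1−2r))` and
`h_o(r) = (1−p)(1−r)/(r(δ−1) + p(2r−1) + 1)` are well defined (positive
denominators on `[0,1]`) and strictly decreasing in the group size `r`. -/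
theorem heterophilic_exponents_decreasing (p δ : ℝ)
    (hp0 : 0 < p) (hp1 : p < 1) (hδ : 1 ≤ δ) :
    (∀ r ∈ Set.Icc (0 : ℝ) 1, 0 < r * (1 + δ) + p * (1 - 2 * r)) ∧
    (∀ r ∈ Set.Icc (0 : ℝ) 1, 0 < r * (δ - 1) + p * (2 * r - 1) + 1) ∧
    StrictAntiOn (fun r : ℝ => p * (1 - r) / (r * (1 + δ) + p * (1 - 2 * r)))
      (Set.Icc (0 : ℝ) 1) ∧
    StrictAntiOn (fun r : ℝ => (1 - p) * (1 - r) / (r * (δ - 1) + p * (2 * r - 1) + 1))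
      (Set.Icc (0 : ℝ) 1) := by
  have hd1 : ∀ r ∈ Set.Icc (0 : ℝ) 1, 0 < r * (1 + δ) + p * (1 - 2 * r) := by
    rintro r ⟨h0, h1⟩
    nlinarith [mul_nonneg h0 (show (0:ℝ) ≤ 1 + δ - 2 * p by linarith)]
  have hd2 : ∀ r ∈ Set.Icc (0 : ℝ) 1, 0 < r * (δ - 1) + p * (2 * r - 1) + 1 := by
    rintro r ⟨h0, h1⟩
    nlinarith [mul_nonneg h0 (show (0:ℝ) ≤ δ - 1 + 2 * p by linarith)]
  refine ⟨hd1, hd2, ?_, ?_⟩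
  · rintro a ha b hb hab
    simp only
    rw [div_lt_div_iff₀ (hd1 b hb) (hd1 a ha)]
    nlinarith [mul_pos hp0 (mul_pos (sub_pos.2 hab) (show (0:ℝ) < 1 + δ - p by linarith))]
  · rintro a ha b hb hab
    simp only
    rw [div_lt_div_iff₀ (hd2 b hb) (hd2 a ha)]
    nlinarith [mul_pos (show (0:ℝ) < 1 - p by linarith)
      (mul_pos (sub_pos.2 hab) (show (0:ℝ) < δ + p by linarith))]
end
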